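/- arXiv:1702.06434 — 3 statements merged into one kernel-verified Lean document; each statement's English description precedes it below -/
import Mathlib

section
/- Let α₂, α₃, β₂, β₃ be nonzero real numbers with 1 + 1/α₂² + 1/α₃² + β₃/α₃ + β₂/α₂ ≠ 0, and let 0 < ε < π. Then det M(0, 3ε/π, 0, 0) ≠ 0, where M is the type-1 boundary condition matrix with a₂ = α₂, a₃ = α₃, b₂ = β₂, b₃ = β₃, c₂ = 1/α₂, c₃ = 1/α₃. -/
open Real Matrix

/-- The type-1 boundary condition matrix M(λ₁,λ₂,λ₃,λ₄) with coefficients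
a₂, a₃, b₂, b₃, c₂, c₃. -/
noncomputable def Mbc (a₂ a₃ b₂ b₃ c₂ c₃ : ℝ) (l₁ l₂ l₃ l₄ : ℝ) : Matrix (Fin 4) (Fin 4) ℂ :=
  !![(2 * Real.sin (π*l₁/3 + π/6) : ℝ), -(a₂:ℂ) * Complex.exp (π*l₃*Complex.I), 0,
       (2 * Real.sin (π*l₂/3 + π/6) : ℝ);
     (2 * Real.sin (π*l₁/3 + π/6) : ℝ), 0, -(a₃:ℂ) * Complex.exp (π*l₄*Complex.I),
       (2 * Real.sin (π*l₂/3 + π/6) : ℝ);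
     (2 * Real.sin (π*l₁/3 - π/6) : ℝ), -(b₂:ℂ) * Complex.exp (π*(l₃-1)*Complex.I),
       -(b₃:ℂ) * Complex.exp (π*(l₄-1)*Complex.I), (2 * Real.sin (π*l₂/3 - π/6) : ℝ);
     (2 * Real.sin (π*l₁/3 - π/2) : ℝ), -(c₂:ℂ) * Complex.exp (π*(l₃-2)*Complex.I),
       -(c₃:ℂ) * Complex.exp (π*(l₄-2)*Complex.I), (2 * Real.sin (π*l₂/3 - π/2) : ℝ)]


set_option maxHeartbeats 1000000 in
private lemma det4_aux (a b p q c d A B C : ℂ) :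
    Matrix.det !![1, -a, 0, A; 1, 0, -b, A; -1, p, q, B; -2, c, d, C]
      = a*q*(C+2*A) + a*(A+B)*(-d) + b*(p-a)*(C+2*A) + b*(A+B)*(-c)
        + 2*a*b*(A+B) := by
  simp [Matrix.det_succ_row_zero, Fin.sum_univ_succ, Fin.succAbove]
  ring

theorem stmt_3 (α₂ α₃ β₂ β₃ ε : ℝ) (hα₂ : α₂ ≠ 0) (hα₃ : α₃ ≠ 0)
    (hβ₂ : β₂ ≠ 0) (hβ₃ : β₃ ≠ 0)
    (hne : 1 + 1/α₂^2 + 1/α₃^2 + β₃/α₃ + β₂/α₂ ≠ 0) (hε : 0 < ε) (hε' : ε < π) :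
    (Mbc α₂ α₃ β₂ β₃ (1/α₂) (1/α₃) 0 (3*ε/π) 0 0).det ≠ 0 := by
  have hπ : (π:ℝ) ≠ 0 := Real.pi_ne_zero
  have harg : π * (3*ε/π) / 3 = ε := by field_simp
  have e1 : Complex.exp ((π:ℝ) * (0:ℝ) * Complex.I) = 1 := by norm_num
  have e2 : Complex.exp ((π:ℝ) * ((0:ℝ)-1) * Complex.I) = -1 := by
    push_cast
    rw [show (π:ℂ) * (0-1) * Complex.I = -(π * Complex.I) by ring,
        Complex.exp_neg, Complex.exp_pi_mul_I]
    norm_num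
  have e3 : Complex.exp ((π:ℝ) * ((0:ℝ)-2) * Complex.I) = 1 := by
    push_cast
    rw [show (π:ℂ) * (0-2) * Complex.I = -(2 * π * Complex.I) by ring,
        Complex.exp_neg, Complex.exp_two_pi_mul_I]
    norm_num
  have e4 : Complex.exp ((π:ℝ) * 2 * Complex.I) = 1 := by
    rw [show ((π:ℝ):ℂ) * 2 * Complex.I = 2*π*Complex.I by ring, Complex.exp_two_pi_mul_I]
  have hM : Mbc α₂ α₃ β₂ β₃ (1/α₂) (1/α₃) 0 (3*ε/π) 0 0 =
      !![1, -(α₂:ℂ), 0, ((2*Real.sin (ε+π/6) : ℝ) : ℂ);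
         1, 0, -(α₃:ℂ), ((2*Real.sin (ε+π/6) : ℝ) : ℂ);
         -1, (β₂:ℂ), (β₃:ℂ), ((2*Real.sin (ε-π/6) : ℝ) : ℂ);
         -2, -((1/α₂ : ℝ):ℂ), -((1/α₃ : ℝ):ℂ), ((2*Real.sin (ε-π/2) : ℝ) : ℂ)] := by
    ext i j
    fin_cases i <;> fin_cases j <;>
      simp [Mbc, harg, e1, e2, e3, e4, Real.sin_pi_div_six, Real.sin_pi_div_two,
        Complex.exp_neg, Complex.exp_pi_mul_I, Complex.exp_two_pi_mul_I, inv_neg]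
  have hreal : α₂*β₃*(2*Real.sin (ε-π/2)+2*(2*Real.sin (ε+π/6)))
      + α₂*(2*Real.sin (ε+π/6)+2*Real.sin (ε-π/6))*(-(-(1/α₃)))
      + α₃*(β₂-α₂)*(2*Real.sin (ε-π/2)+2*(2*Real.sin (ε+π/6)))
      + α₃*(2*Real.sin (ε+π/6)+2*Real.sin (ε-π/6))*(-(-(1/α₂)))
      + 2*α₂*α₃*(2*Real.sin (ε+π/6)+2*Real.sin (ε-π/6))
      = 2 * Real.sqrt 3 * Real.sin ε *
          (α₂*α₃*(1 + 1/α₂^2 + 1/α₃^2 + β₃/α₃ + β₂/α₂)) := by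
    rw [Real.sin_add, Real.sin_sub, Real.sin_sub, Real.sin_pi_div_six,
        Real.cos_pi_div_six, Real.sin_pi_div_two, Real.cos_pi_div_two]
    field_simp
    ring
  have key : (Mbc α₂ α₃ β₂ β₃ (1/α₂) (1/α₃) 0 (3*ε/π) 0 0).det
      = ((2 * Real.sqrt 3 * Real.sin ε *
          (α₂*α₃*(1 + 1/α₂^2 + 1/α₃^2 + β₃/α₃ + β₂/α₂)) : ℝ) : ℂ) := by
    rw [hM, det4_aux]
    exact_mod_cast congrArg (Complex.ofReal) hreal
  rw [key]
  have hs : Real.sin ε ≠ 0 := ne_of_gt (Real.sin_pos_of_pos_of_lt_pi hε hε')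
  have h3 : Real.sqrt 3 ≠ 0 := by positivity
  have hb : α₂*α₃*(1 + 1/α₂^2 + 1/α₃^2 + β₃/α₃ + β₂/α₂) ≠ 0 :=
    mul_ne_zero (mul_ne_zero hα₂ hα₃) hne
  exact_mod_cast mul_ne_zero (mul_ne_zero (mul_ne_zero two_ne_zero h3) hs) hb
end

section
/- The derivative of the Airy function A(x) = (1/2π) ∫_ℝ e^{ixξ + iξ³} dξ satisfies A′(0) = -1/(3Γ(1/3)). -/
open Real Filter intervalIntegral

section AiryDerivAux

open MeasureTheory Set

lemma L1 (t R : ℝ) :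
    ∫ u in (0:ℝ)..R, Real.exp (-(u*t)) * Real.sin u
      = (1 - Real.exp (-(R*t)) * (Real.cos R + t * Real.sin R)) / (1 + t^2) := by
  have h12 : (0:ℝ) < 1 + t^2 := by positivity
  have key : ∀ u : ℝ, HasDerivAt (fun u => -(Real.exp (-(u*t)) * (Real.cos u + t * Real.sin u)) / (1 + t^2))
      (Real.exp (-(u*t)) * Real.sin u) u := by
    intro u
    have h1 : HasDerivAt (fun u : ℝ => Real.exp (-(u*t))) (Real.exp (-(u*t)) * (-t)) u := by
      have : HasDerivAt (fun u : ℝ => -(u*t)) (-t) u := by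
        exact (by simpa using ((hasDerivAt_id u).mul_const t).neg : HasDerivAt (-fun y : ℝ => y * t) (-t) u)
      exact (Real.hasDerivAt_exp _).comp u this
    have h2 : HasDerivAt (fun u : ℝ => Real.cos u + t * Real.sin u)
        (-Real.sin u + t * Real.cos u) u :=
      (Real.hasDerivAt_cos u).add ((Real.hasDerivAt_sin u).const_mul t)
    have h3 := ((h1.mul h2).neg).div_const (1 + t^2)
    refine h3.congr_deriv ?_
    rw [div_eq_iff h12.ne']
    ring
  rw [intervalIntegral.integral_eq_sub_of_hasDerivAt (fun u _ => key u)
    (by apply Continuous.intervalIntegrable; continuity)]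
  simp [Real.cos_zero, Real.sin_zero]
  field_simp
  ring

lemma meas1 : Measurable (fun t : ℝ => t ^ (-(2/3) : ℝ) / (1 + t^2)) :=
  by fun_prop

-- integrability of t^(-2/3)/(1+t^2) on Ioi 0

lemma intg2 : IntegrableOn (fun t : ℝ => t ^ (-(2/3) : ℝ) / (1 + t^2)) (Ioi 0) := by
  have h1 : IntegrableOn (fun t : ℝ => t ^ (-(2/3) : ℝ) / (1 + t^2)) (Ioc 0 1) := by
    apply Integrable.mono' (g := fun t : ℝ => t ^ (-(2/3) : ℝ))
    · have := intervalIntegral.intervalIntegrable_rpow' (a := 0) (b := 1)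
        (r := (-(2/3):ℝ)) (by norm_num)
      rwa [intervalIntegrable_iff_integrableOn_Ioc_of_le zero_le_one] at this
    · exact meas1.aestronglyMeasurable
    · filter_upwards [ae_restrict_mem measurableSet_Ioc] with t ht
      have h12 : (0:ℝ) < 1 + t^2 := by positivity
      rw [norm_div, Real.norm_rpow_of_nonneg ht.1.le, Real.norm_of_nonneg ht.1.le,
        Real.norm_of_nonneg h12.le]
      nth_rewrite 2 [← div_one (t ^ (-(2/3):ℝ))]
      apply div_le_div_of_nonneg_left _ one_pos (by linarith [sq_nonneg t])
      exact Real.rpow_nonneg ht.1.le _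
  have h2 : IntegrableOn (fun t : ℝ => t ^ (-(2/3) : ℝ) / (1 + t^2)) (Ioi 1) := by
    apply Integrable.mono' (g := fun t : ℝ => t ^ (-(2:ℝ)))
    · exact integrableOn_Ioi_rpow_of_lt (by norm_num) one_pos
    · exact meas1.aestronglyMeasurable
    · filter_upwards [ae_restrict_mem measurableSet_Ioi] with t ht
      rw [mem_Ioi] at ht
      have ht0 : (0:ℝ) < t := by linarith
      have h12 : (0:ℝ) < 1 + t^2 := by positivity
      rw [norm_div, Real.norm_rpow_of_nonneg ht0.le, Real.norm_of_nonneg ht0.le,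
        Real.norm_of_nonneg h12.le]
      rw [div_le_iff₀ h12]
      calc t ^ (-(2/3):ℝ) ≤ t ^ (-(2:ℝ)) * t ^ (2:ℝ) := by
            rw [← Real.rpow_add ht0]
            exact Real.rpow_le_rpow_of_exponent_le (by linarith) (by norm_num)
        _ ≤ t ^ (-(2:ℝ)) * (1 + t^2) := by
            apply mul_le_mul_of_nonneg_left _ (Real.rpow_nonneg ht0.le _)
            rw [Real.rpow_two]
            nlinarith
  have : Ioi (0:ℝ) = Ioc 0 1 ∪ Ioi 1 := by
    rw [Ioc_union_Ioi_eq_Ioi]; norm_num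
  rw [this]
  exact h1.union h2

lemma intg {a r : ℝ} (ha : 0 < a) (hr : 0 < r) :
    IntegrableOn (fun t : ℝ => t ^ (a-1) * Real.exp (-(r*t))) (Ioi 0) := by
  have := integrableOn_rpow_mul_exp_neg_mul_rpow (p := 1) (s := a-1) (b := r)
    (by linarith) one_pos hr
  simpa [Real.rpow_one, neg_mul] using this

lemma L4 : ∫ t in Ioi (0:ℝ), t ^ (-(2/3):ℝ) / (1 + t^2) = π := by
  have step1 : ∫ t in Ioi (0:ℝ), t ^ (-(2/3):ℝ) / (1 + t^2)
      = ∫ t in Ioi (0:ℝ), ∫ s in Ioi (0:ℝ), t ^ (-(2/3):ℝ) * Real.exp (-((1+t^2)*s)) := by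
    refine setIntegral_congr_fun measurableSet_Ioi (fun t ht => ?_)
    rw [mem_Ioi] at ht
    have h12 : (0:ℝ) < 1 + t^2 := by positivity
    have := integral_rpow_mul_exp_neg_mul_Ioi (a := 1) (r := 1 + t^2) one_pos h12
    simp only [sub_self, Real.rpow_zero, one_mul, Real.rpow_one, Real.Gamma_one, mul_one] at this
    rw [MeasureTheory.integral_const_mul, this]
    rw [div_eq_mul_inv, one_div]
  rw [step1]
  have swap : ∫ t in Ioi (0:ℝ), ∫ s in Ioi (0:ℝ), t ^ (-(2/3):ℝ) * Real.exp (-((1+t^2)*s))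
      = ∫ s in Ioi (0:ℝ), ∫ t in Ioi (0:ℝ), t ^ (-(2/3):ℝ) * Real.exp (-((1+t^2)*s)) := by
    apply MeasureTheory.integral_integral_swap
    rw [MeasureTheory.integrable_prod_iff]
    · constructor
      · filter_upwards [ae_restrict_mem measurableSet_Ioi] with t ht
        rw [mem_Ioi] at ht
        have h12 : (0:ℝ) < 1 + t^2 := by positivity
        have := (intg one_pos h12).const_mul (t ^ (-(2/3):ℝ))
        simpa [Real.rpow_zero] using this
      · apply intg2.congr
        filter_upwards [ae_restrict_mem measurableSet_Ioi] with t ht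
        rw [mem_Ioi] at ht
        have h12 : (0:ℝ) < 1 + t^2 := by positivity
        have hval := integral_rpow_mul_exp_neg_mul_Ioi (a := 1) (r := 1 + t^2) one_pos h12
        simp only [sub_self, Real.rpow_zero, one_mul, Real.rpow_one, Real.Gamma_one, mul_one]
          at hval
        have : ∀ s : ℝ, ‖t ^ (-(2/3):ℝ) * Real.exp (-((1+t^2)*s))‖
            = t ^ (-(2/3):ℝ) * Real.exp (-((1+t^2)*s)) := by
          intro s
          rw [norm_mul, Real.norm_rpow_of_nonneg ht.le, Real.norm_of_nonneg ht.le,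
            Real.norm_of_nonneg (Real.exp_nonneg _)]
        simp only [Function.uncurry]
        simp_rw [this]
        rw [MeasureTheory.integral_const_mul, hval, div_eq_mul_inv, one_div]
    · apply Measurable.aestronglyMeasurable
      fun_prop
  rw [swap]
  have inner : ∀ s ∈ Ioi (0:ℝ), ∫ t in Ioi (0:ℝ), t ^ (-(2/3):ℝ) * Real.exp (-((1+t^2)*s))
      = Real.exp (-s) * (s ^ (-(1/6):ℝ) * (1/2) * Real.Gamma (1/6)) := by
    intro s hs
    rw [mem_Ioi] at hs
    have key := integral_rpow_mul_exp_neg_mul_rpow (p := 2) (q := -(2/3)) (b := s)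
      two_pos (by norm_num) hs
    calc ∫ t in Ioi (0:ℝ), t ^ (-(2/3):ℝ) * Real.exp (-((1+t^2)*s))
        = ∫ t in Ioi (0:ℝ), Real.exp (-s) * (t ^ (-(2/3):ℝ) * Real.exp (-s * t ^ (2:ℝ))) := by
          refine setIntegral_congr_fun measurableSet_Ioi (fun t ht => ?_)
          rw [mem_Ioi] at ht
          rw [Real.rpow_two, show -((1+t^2)*s) = -s + -s*t^2 by ring, Real.exp_add]
          ring
      _ = Real.exp (-s) * (s ^ (-(-(2/3)+1)/2 : ℝ) * (1/2) * Real.Gamma ((-(2/3)+1)/2)) := by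
          rw [MeasureTheory.integral_const_mul, key]
      _ = Real.exp (-s) * (s ^ (-(1/6):ℝ) * (1/2) * Real.Gamma (1/6)) := by
          norm_num
  rw [setIntegral_congr_fun measurableSet_Ioi inner]
  have : ∫ s in Ioi (0:ℝ), Real.exp (-s) * (s ^ (-(1/6):ℝ) * (1/2) * Real.Gamma (1/6))
      = ((1/2) * Real.Gamma (1/6)) * ∫ s in Ioi (0:ℝ), s ^ ((5/6:ℝ)-1) * Real.exp (-(1*s)) := by
    rw [← MeasureTheory.integral_const_mul]
    refine setIntegral_congr_fun measurableSet_Ioi (fun s hs => ?_)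
    norm_num
    ring
  rw [this, integral_rpow_mul_exp_neg_mul_Ioi (by norm_num : (0:ℝ) < 5/6) one_pos]
  have hrefl := Real.Gamma_mul_Gamma_one_sub (1/6)
  norm_num at hrefl ⊢
  rw [show π * (1/6 : ℝ) = π/6 by ring, Real.sin_pi_div_six] at hrefl
  nlinarith [Real.pi_pos]

lemma Lrep {u : ℝ} (hu : 0 < u) :
    ∫ t in Ioi (0:ℝ), t ^ (-(2/3):ℝ) * Real.exp (-(u*t))
      = Real.Gamma (1/3) * u ^ (-(1/3):ℝ) := by
  have := integral_rpow_mul_exp_neg_mul_Ioi (a := 1/3) (r := u) (by norm_num) hu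
  rw [show (1/3:ℝ)-1 = -(2/3) by norm_num] at this
  rw [this, one_div, ← Real.rpow_neg_one, ← Real.rpow_mul hu.le]
  norm_num [mul_comm]

-- L2 : the Fubini identity

lemma L2 {R : ℝ} (hR : 0 < R) :
    Real.Gamma (1/3) * ∫ u in (0:ℝ)..R, Real.sin u * u ^ (-(1/3):ℝ)
      = ∫ t in Ioi (0:ℝ), t ^ (-(2/3):ℝ) *
          ((1 - Real.exp (-(R*t)) * (Real.cos R + t * Real.sin R)) / (1 + t^2)) := by
  rw [intervalIntegral.integral_of_le hR.le, ← MeasureTheory.integral_const_mul]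
  have step1 : ∫ u in Ioc (0:ℝ) R, Real.Gamma (1/3) * (Real.sin u * u ^ (-(1/3):ℝ))
      = ∫ u in Ioc (0:ℝ) R, ∫ t in Ioi (0:ℝ),
          Real.sin u * (t ^ (-(2/3):ℝ) * Real.exp (-(u*t))) := by
    refine setIntegral_congr_fun measurableSet_Ioc (fun u hu => ?_)
    rw [MeasureTheory.integral_const_mul, Lrep hu.1]
    ring
  rw [step1]
  have swap : ∫ u in Ioc (0:ℝ) R, ∫ t in Ioi (0:ℝ),
        Real.sin u * (t ^ (-(2/3):ℝ) * Real.exp (-(u*t)))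
      = ∫ t in Ioi (0:ℝ), ∫ u in Ioc (0:ℝ) R,
          Real.sin u * (t ^ (-(2/3):ℝ) * Real.exp (-(u*t))) := by
    apply MeasureTheory.integral_integral_swap
    rw [MeasureTheory.integrable_prod_iff]
    · constructor
      · filter_upwards [ae_restrict_mem measurableSet_Ioc] with u hu
        have := (intg (by norm_num : (0:ℝ) < 1/3) hu.1).const_mul (Real.sin u)
        rw [show (1/3:ℝ)-1 = -(2/3) by norm_num] at this
        exact this
      · have hg : IntegrableOn
            (fun u : ℝ => Real.Gamma (1/3) * (|Real.sin u| * u ^ (-(1/3):ℝ))) (Ioc 0 R) := by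
          apply Integrable.mono' (g := fun u : ℝ => Real.Gamma (1/3) * u ^ (-(1/3):ℝ))
          · have := intervalIntegral.intervalIntegrable_rpow' (a := 0) (b := R)
              (r := (-(1/3):ℝ)) (by norm_num)
            rw [intervalIntegrable_iff_integrableOn_Ioc_of_le hR.le] at this
            exact this.const_mul _
          · apply Measurable.aestronglyMeasurable; fun_prop
          · filter_upwards [ae_restrict_mem measurableSet_Ioc] with u hu
            have h1 : (0:ℝ) ≤ Real.Gamma (1/3) := Real.Gamma_nonneg_of_nonneg (by norm_num)
            have h2 : (0:ℝ) ≤ u ^ (-(1/3):ℝ) := Real.rpow_nonneg hu.1.le _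
            rw [Real.norm_of_nonneg (by positivity)]
            have h3 : |Real.sin u| ≤ 1 := Real.abs_sin_le_one _
            exact mul_le_mul_of_nonneg_left (mul_le_of_le_one_left h2 h3) h1
        apply hg.congr
        filter_upwards [ae_restrict_mem measurableSet_Ioc] with u hu
        have heq : ∀ t ∈ Ioi (0:ℝ), ‖Real.sin u * (t ^ (-(2/3):ℝ) * Real.exp (-(u*t)))‖
            = |Real.sin u| * (t ^ (-(2/3):ℝ) * Real.exp (-(u*t))) := by
          intro t ht
          rw [mem_Ioi] at ht
          rw [norm_mul, norm_mul, Real.norm_rpow_of_nonneg ht.le, Real.norm_of_nonneg ht.le,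
            Real.norm_of_nonneg (Real.exp_nonneg _), Real.norm_eq_abs]
        simp only [Function.uncurry]
        rw [setIntegral_congr_fun measurableSet_Ioi heq, MeasureTheory.integral_const_mul,
          Lrep hu.1]
        ring
    · apply Measurable.aestronglyMeasurable; fun_prop
  rw [swap]
  refine setIntegral_congr_fun measurableSet_Ioi (fun t ht => ?_)
  have inner : ∫ u in Ioc (0:ℝ) R, Real.sin u * (t ^ (-(2/3):ℝ) * Real.exp (-(u*t)))
      = t ^ (-(2/3):ℝ) * ∫ u in (0:ℝ)..R, Real.exp (-(u*t)) * Real.sin u := by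
    rw [intervalIntegral.integral_of_le hR.le, ← MeasureTheory.integral_const_mul]
    refine setIntegral_congr_fun measurableSet_Ioc (fun u hu => ?_)
    ring
  rw [inner, L1]

noncomputable def E (R : ℝ) : ℝ :=
  ∫ t in Ioi (0:ℝ), t ^ (-(2/3):ℝ) *
    (Real.exp (-(R*t)) * (Real.cos R + t * Real.sin R) / (1 + t^2))

lemma Ebound {R : ℝ} (hR : 0 < R) :
    (∀ t ∈ Ioi (0:ℝ), ‖t ^ (-(2/3):ℝ) *
        (Real.exp (-(R*t)) * (Real.cos R + t * Real.sin R) / (1 + t^2))‖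
      ≤ t ^ ((1/3:ℝ)-1) * Real.exp (-(R*t)) + t ^ ((4/3:ℝ)-1) * Real.exp (-(R*t))) := by
  intro t ht
  rw [mem_Ioi] at ht
  have h12 : (0:ℝ) < 1 + t^2 := by positivity
  have hb : |Real.cos R + t * Real.sin R| ≤ 1 + t := by
    calc |Real.cos R + t * Real.sin R| ≤ |Real.cos R| + |t * Real.sin R| := abs_add_le _ _
      _ ≤ 1 + t := by
          rw [abs_mul, abs_of_nonneg ht.le]
          have := Real.abs_cos_le_one R
          have h2 := Real.abs_sin_le_one R
          nlinarith
  rw [norm_mul, Real.norm_rpow_of_nonneg ht.le, Real.norm_of_nonneg ht.le, norm_div,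
    Real.norm_of_nonneg h12.le, norm_mul, Real.norm_of_nonneg (Real.exp_nonneg _),
    Real.norm_eq_abs]
  have key : t ^ (-(2/3):ℝ) * (Real.exp (-(R*t)) * |Real.cos R + t * Real.sin R| / (1+t^2))
      ≤ t ^ (-(2/3):ℝ) * (Real.exp (-(R*t)) * (1+t)) := by
    apply mul_le_mul_of_nonneg_left _ (Real.rpow_nonneg ht.le _)
    rw [div_le_iff₀ h12]
    have h1 : Real.exp (-(R*t)) * |Real.cos R + t * Real.sin R|
        ≤ Real.exp (-(R*t)) * (1+t) :=
      mul_le_mul_of_nonneg_left hb (Real.exp_nonneg _)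
    nlinarith [mul_nonneg (mul_nonneg (Real.exp_nonneg (-(R*t))) (by linarith : (0:ℝ) ≤ 1+t))
      (sq_nonneg t), Real.exp_nonneg (-(R*t))]
  refine key.trans (le_of_eq ?_)
  rw [show (1/3:ℝ)-1 = -(2/3) by norm_num, show (4/3:ℝ)-1 = (1/3:ℝ) by norm_num]
  have : t ^ ((1/3):ℝ) = t ^ (-(2/3):ℝ) * t := by
    rw [show (1/3:ℝ) = -(2/3) + 1 by norm_num, Real.rpow_add ht, Real.rpow_one]
  rw [this]
  ring

lemma Eintg {R : ℝ} (hR : 0 < R) :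
    IntegrableOn (fun t : ℝ => t ^ (-(2/3):ℝ) *
      (Real.exp (-(R*t)) * (Real.cos R + t * Real.sin R) / (1 + t^2))) (Ioi 0) := by
  apply Integrable.mono' (g := fun t : ℝ =>
    t ^ ((1/3:ℝ)-1) * Real.exp (-(R*t)) + t ^ ((4/3:ℝ)-1) * Real.exp (-(R*t)))
  · exact (intg (by norm_num) hR).add (intg (by norm_num) hR)
  · apply Measurable.aestronglyMeasurable; fun_prop
  · filter_upwards [ae_restrict_mem measurableSet_Ioi] with t ht
    exact Ebound hR t ht

lemma Etendsto : Tendsto E atTop (nhds 0) := by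
  have hB : Tendsto (fun R : ℝ => R ^ (-(1/3):ℝ) * Real.Gamma (1/3)
      + R ^ (-(4/3):ℝ) * Real.Gamma (4/3)) atTop (nhds 0) := by
    have h1 := (tendsto_rpow_neg_atTop (by norm_num : (0:ℝ) < 1/3)).mul_const (Real.Gamma (1/3))
    have h2 := (tendsto_rpow_neg_atTop (by norm_num : (0:ℝ) < 4/3)).mul_const (Real.Gamma (4/3))
    simpa using h1.add h2
  apply squeeze_zero_norm' _ hB
  filter_upwards [eventually_gt_atTop (0:ℝ)] with R hR
  have hle : ‖E R‖ ≤ ∫ t in Ioi (0:ℝ),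
      (t ^ ((1/3:ℝ)-1) * Real.exp (-(R*t)) + t ^ ((4/3:ℝ)-1) * Real.exp (-(R*t))) := by
    apply MeasureTheory.norm_integral_le_of_norm_le
      ((intg (by norm_num) hR).add (intg (by norm_num) hR))
    filter_upwards [ae_restrict_mem measurableSet_Ioi] with t ht
    exact Ebound hR t ht
  refine hle.trans (le_of_eq ?_)
  rw [MeasureTheory.integral_add (intg (by norm_num) hR) (intg (by norm_num) hR),
    integral_rpow_mul_exp_neg_mul_Ioi (by norm_num : (0:ℝ) < 1/3) hR,
    integral_rpow_mul_exp_neg_mul_Ioi (by norm_num : (0:ℝ) < 4/3) hR]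
  rw [one_div, ← Real.rpow_neg_one R, ← Real.rpow_mul (le_of_lt hR),
    ← Real.rpow_mul (le_of_lt hR)]
  norm_num

lemma ML : Tendsto (fun R : ℝ => ∫ u in (0:ℝ)..R, Real.sin u * u ^ (-(1/3):ℝ))
    atTop (nhds (π / Real.Gamma (1/3))) := by
  have hΓ : (0:ℝ) < Real.Gamma (1/3) := Real.Gamma_pos_of_pos (by norm_num)
  have h : Tendsto (fun R : ℝ => (π - E R) * (Real.Gamma (1/3))⁻¹) atTop
      (nhds (π / Real.Gamma (1/3))) := by
    have := ((tendsto_const_nhds (x := π) (f := atTop (α := ℝ))).sub Etendsto).mul_const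
      (Real.Gamma (1/3))⁻¹
    simpa [div_eq_mul_inv] using this
  apply h.congr'
  filter_upwards [eventually_gt_atTop (0:ℝ)] with R hR
  have hsplit : ∫ t in Ioi (0:ℝ), t ^ (-(2/3):ℝ) *
        ((1 - Real.exp (-(R*t)) * (Real.cos R + t * Real.sin R)) / (1 + t^2))
      = (∫ t in Ioi (0:ℝ), t ^ (-(2/3):ℝ) / (1 + t^2)) - E R := by
    rw [E, ← MeasureTheory.integral_sub intg2 (Eintg hR)]
    refine setIntegral_congr_fun measurableSet_Ioi (fun t ht => ?_)
    have h12 : (0:ℝ) < 1 + t^2 := by positivity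
    field_simp
  have := L2 hR
  rw [hsplit, L4] at this
  rw [← this]
  field_simp

lemma gcont : ContinuousOn (fun u : ℝ => Real.sin u * u ^ (-(1/3):ℝ)) (Ici 0) := by
  intro u hu
  rcases eq_or_lt_of_le (mem_Ici.mp hu) with h | h
  · subst h
    have g0 : Real.sin 0 * (0:ℝ) ^ (-(1/3):ℝ) = 0 := by simp
    unfold ContinuousWithinAt
    rw [show (fun u : ℝ => Real.sin u * u ^ (-(1/3):ℝ)) 0 = 0 from g0]
    have hten : Tendsto (fun v : ℝ => v ^ ((2/3):ℝ)) (nhdsWithin 0 (Ici 0)) (nhds 0) := by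
      have hc := (Real.continuousAt_rpow_const 0 (2/3) (Or.inr (by norm_num))).tendsto
      rw [Real.zero_rpow (by norm_num : ((2:ℝ)/3) ≠ 0)] at hc
      exact tendsto_nhdsWithin_of_tendsto_nhds hc
    apply squeeze_zero_norm' _ hten
    · filter_upwards [self_mem_nhdsWithin] with v hv
      rcases eq_or_lt_of_le (mem_Ici.mp hv) with h1 | h1
      · simp [← h1, Real.zero_rpow (by norm_num : ((2:ℝ)/3) ≠ 0)]
      · rw [norm_mul, Real.norm_eq_abs, Real.norm_rpow_of_nonneg h1.le,
          Real.norm_of_nonneg h1.le]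
        calc |Real.sin v| * v ^ (-(1/3):ℝ) ≤ v * v ^ (-(1/3):ℝ) := by
              apply mul_le_mul_of_nonneg_right _ (Real.rpow_nonneg h1.le _)
              calc |Real.sin v| ≤ |v| := Real.abs_sin_le_abs
                _ = v := abs_of_pos h1
          _ = v ^ ((2/3):ℝ) := by
              rw [show (2/3:ℝ) = 1 + -(1/3) by norm_num, Real.rpow_add h1, Real.rpow_one]
  · exact (Real.continuous_sin.continuousAt.mul
      (Real.continuousAt_rpow_const u _ (Or.inl h.ne'))).continuousWithinAt

lemma Csub {R : ℝ} (hR : 0 < R) :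
    ∫ u in (0:ℝ)..R^3, Real.sin u * u ^ (-(1/3):ℝ)
      = 3 * ∫ x in (0:ℝ)..R, x * Real.sin (x^3) := by
  have h := intervalIntegral.integral_comp_smul_deriv' (a := 0) (b := R)
    (f := fun x => x^3) (f' := fun x => 3*x^2)
    (g := fun u : ℝ => Real.sin u * u ^ (-(1/3):ℝ))
    (fun x _ => by simpa using hasDerivAt_pow 3 x)
    (by fun_prop)
    (gcont.mono ?_)
  · simp only [Function.comp] at h
    norm_num at h
    rw [← h]
    rw [← intervalIntegral.integral_const_mul]
    apply intervalIntegral.integral_congr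
    intro x hx
    rw [uIcc_of_le hR.le] at hx
    rcases eq_or_lt_of_le hx.1 with h0 | h0
    · simp [← h0]
    · have : ((x^3 : ℝ)) ^ (-(1/3):ℝ) = x⁻¹ := by
        rw [← Real.rpow_natCast x 3, ← Real.rpow_mul h0.le]
        norm_num
        rw [← Real.rpow_neg_one]
      simp only [smul_eq_mul, Function.comp]
      rw [this]
      field_simp
  · intro y hy
    rcases hy with ⟨x, hx, rfl⟩
    rw [uIcc_of_le hR.le] at hx
    exact mem_Ici.mpr (pow_nonneg hx.1 3)

lemma Lsym (R : ℝ) :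
    (∫ ξ in (-R)..R, Complex.I * (ξ:ℂ) * Complex.exp (Complex.I * (ξ:ℂ)^3))
      = (((-2) * ∫ x in (0:ℝ)..R, x * Real.sin (x^3) : ℝ) : ℂ) := by
  set F : ℝ → ℂ := fun ξ => Complex.I * (ξ:ℂ) * Complex.exp (Complex.I * (ξ:ℂ)^3) with hF
  have hcont : Continuous F := by fun_prop
  have hadd := intervalIntegral.integral_add_adjacent_intervals
    (hcont.intervalIntegrable (μ := volume) (-R) 0) (hcont.intervalIntegrable (μ := volume) 0 R)
  have hneg : (∫ x in (0:ℝ)..R, F (-x)) = ∫ x in (-R)..(0:ℝ), F x := by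
    simpa using intervalIntegral.integral_comp_neg (a := 0) (b := R) (f := F)
  have key : ∀ x : ℝ, F (-x) + F x = (((-2) * (x * Real.sin (x^3)) : ℝ) : ℂ) := by
    intro x
    simp only [hF]
    push_cast
    rw [show Complex.I * ((x:ℂ))^3 = ((x:ℂ)^3) * Complex.I by ring,
        show Complex.I * (-(x:ℂ))^3 = (-((x:ℂ)^3)) * Complex.I by ring,
        Complex.exp_mul_I, Complex.exp_mul_I, Complex.cos_neg, Complex.sin_neg]
    linear_combination (2*(x:ℂ)*Complex.sin ((x:ℂ)^3)) * Complex.I_sq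
  calc ∫ ξ in (-R)..R, F ξ = (∫ x in (0:ℝ)..R, F (-x)) + ∫ x in (0:ℝ)..R, F x := by
        rw [hneg, hadd]
    _ = ∫ x in (0:ℝ)..R, (F (-x) + F x) := by
        exact (intervalIntegral.integral_add
          ((hcont.comp continuous_neg).intervalIntegrable (μ := volume) 0 R)
          (hcont.intervalIntegrable (μ := volume) 0 R)).symm
    _ = ∫ x in (0:ℝ)..R, (((-2) * (x * Real.sin (x^3)) : ℝ) : ℂ) := by
        simp_rw [key]
    _ = (((-2) * ∫ x in (0:ℝ)..R, x * Real.sin (x^3) : ℝ) : ℂ) := by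
        rw [intervalIntegral.integral_ofReal, intervalIntegral.integral_const_mul]

theorem stmt_9 :
    Tendsto (fun R : ℝ =>
        (1 / (2*π) : ℂ) * ∫ ξ in (-R)..R,
          Complex.I * (ξ:ℂ) * Complex.exp (Complex.I * (ξ:ℂ)^3))
      atTop (nhds ((-(1 / (3 * Real.Gamma (1/3))) : ℝ) : ℂ)) := by
  have hΓ : (0:ℝ) < Real.Gamma (1/3) := Real.Gamma_pos_of_pos (by norm_num)
  have hπ := Real.pi_pos
  have T3 : Tendsto (fun R : ℝ => ∫ u in (0:ℝ)..R^3, Real.sin u * u ^ (-(1/3):ℝ))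
      atTop (nhds (π / Real.Gamma (1/3))) :=
    ML.comp (tendsto_pow_atTop (by norm_num : (3:ℕ) ≠ 0))
  have Treal : Tendsto (fun R : ℝ =>
      -(1/(3*π)) * ∫ u in (0:ℝ)..R^3, Real.sin u * u ^ (-(1/3):ℝ))
      atTop (nhds (-(1 / (3 * Real.Gamma (1/3))))) := by
    have := T3.const_mul (-(1/(3*π)))
    rwa [show -(1/(3*π)) * (π / Real.Gamma (1/3)) = -(1 / (3 * Real.Gamma (1/3))) by
      field_simp] at this
  have Tc := (Complex.continuous_ofReal.tendsto _).comp Treal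
  apply Tc.congr'
  filter_upwards [eventually_gt_atTop (0:ℝ)] with R hR
  have hsub := Csub hR
  rw [Function.comp, Lsym R, show (∫ x in (0:ℝ)..R, x * Real.sin (x^3))
    = (1/3) * ∫ u in (0:ℝ)..R^3, Real.sin u * u ^ (-(1/3):ℝ) by rw [hsub]; ring]
  push_cast
  field_simp

end AiryDerivAux
end

section
/- Suppose (u, v, w) is a triple of smooth functions on (-∞,0]×[0,T], [0,∞)×[0,T], [0,∞)×[0,T] respectively, rapidly decaying in x, solving u_t + u_{xxx} = 0, v_t + v_{xxx} = 0, w_t + w_{xxx} = 0 with zero initial data, and satisfying the vertex conditions u(0,t) = α₂v(0,t) = α₃w(0,t), u_x(0,t) = β₂v_x(0,t) + β₃w_x(0,t), u_{xx}(0,t) = (1/α₂)v_{xx}(0,t) + (1/α₃)w_{xx}(0,t) with 3β₂² ≤ 1 and 3β₃² ≤ 1. Then u ≡ v ≡ w ≡ 0. -/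
open Real MeasureTheory Set Filter

noncomputable def Px (U : ℝ × ℝ → ℝ) : ℝ × ℝ → ℝ := fun p => fderiv ℝ U p (1, 0)

lemma Px_smooth {U : ℝ × ℝ → ℝ} (h : ContDiff ℝ (⊤ : ℕ∞) U) : ContDiff ℝ (⊤ : ℕ∞) (Px U) :=
  (h.fderiv_right (by simp)).clm_apply contDiff_const

lemma hasDerivAt_slice {U : ℝ × ℝ → ℝ} (h : ContDiff ℝ (⊤ : ℕ∞) U) (t x : ℝ) :
    HasDerivAt (fun y => U (y, t)) (Px U (x, t)) x := by
  have h1 : HasDerivAt (fun y : ℝ => (y, t)) ((1:ℝ), (0:ℝ)) x :=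
    (hasDerivAt_id x).prodMk (hasDerivAt_const x t)
  exact (((h.differentiable (by simp)) (x, t)).hasFDerivAt).comp_hasDerivAt x h1

lemma deriv_slice {U : ℝ × ℝ → ℝ} (h : ContDiff ℝ (⊤ : ℕ∞) U) (t x : ℝ) :
    deriv (fun y => U (y, t)) x = Px U (x, t) := (hasDerivAt_slice h t x).deriv

lemma iteratedDeriv_slice {U : ℝ × ℝ → ℝ} (h : ContDiff ℝ (⊤ : ℕ∞) U) (j : ℕ) (t x : ℝ) :
    iteratedDeriv j (fun y => U (y, t)) x = (Px^[j] U) (x, t) := by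
  induction j generalizing U x with
  | zero => simp
  | succ n ih =>
    rw [iteratedDeriv_succ']
    have : deriv (fun y => U (y, t)) = fun y => (Px U) (y, t) := funext (deriv_slice h t)
    rw [this, ih (Px_smooth h), Function.iterate_succ_apply]

lemma Px_iterate_smooth {U : ℝ × ℝ → ℝ} (h : ContDiff ℝ (⊤ : ℕ∞) U) (j : ℕ) :
    ContDiff ℝ (⊤ : ℕ∞) (Px^[j] U) := by
  induction j with
  | zero => exact h
  | succ n ih => rw [Function.iterate_succ_apply']; exact Px_smooth ih

lemma key (T : ℝ) (F : ℝ → ℝ → ℝ) (ε : ℝ) (s : ℝ) (hs : 0 ≤ s) (hsT : s ≤ T)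
    (hsm : ContDiff ℝ (⊤ : ℕ∞) (fun p : ℝ × ℝ => F p.1 p.2))
    (C : ℝ)
    (hdec : ∀ x t : ℝ, 0 ≤ x → 0 ≤ t → t ≤ T → ∀ j : ℕ, j ≤ 3 →
      |iteratedDeriv j (fun y => F y t) x| * (1 + x)^2 ≤ C)
    (heq : ∀ x t : ℝ, 0 ≤ x → 0 ≤ t → t ≤ T →
      deriv (fun τ => F x τ) t = ε * iteratedDeriv 3 (fun y => F y t) x)
    (h0 : ∀ x : ℝ, 0 ≤ x → F x 0 = 0) :
    ∫ x in Set.Ioi (0:ℝ), (F x s)^2 =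
      ∫ t in Set.Ioc (0:ℝ) s, ε * ((deriv (fun y => F y t) 0)^2
        - 2 * F 0 t * iteratedDeriv 2 (fun y => F y t) 0) := by
  set U : ℝ × ℝ → ℝ := fun p => F p.1 p.2 with hU
  have hslice : ∀ t, (fun y => F y t) = fun y => U (y, t) := fun t => rfl
  have hiter : ∀ (j : ℕ) (t x : ℝ), iteratedDeriv j (fun y => F y t) x = (Px^[j] U) (x, t) := by
    intro j t x; rw [hslice t]; exact iteratedDeriv_slice hsm j t x
  have hCnn : 0 ≤ C := by
    have := hdec 0 0 le_rfl le_rfl (hs.trans hsT) 0 (by norm_num)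
    simpa using le_trans (by positivity) this
  -- domination
  set K : ℝ := 2 * |ε| * (C * C) with hK
  have hbound : ∀ x t : ℝ, 0 ≤ x → 0 ≤ t → t ≤ T →
      |2 * F x t * (ε * (Px^[3] U) (x, t))| ≤ K * (1 + x^2)⁻¹ := by
    intro x t hx ht htT
    have h1x : (1:ℝ) ≤ (1+x)^2 := by nlinarith
    have h0d := hdec x t hx ht htT 0 (by norm_num)
    have h3d := hdec x t hx ht htT 3 (by norm_num)
    rw [← hiter 3 t x]
    have hF : |F x t| ≤ C / (1+x)^2 := by
      rw [le_div_iff₀ (by positivity)]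
      simpa using h0d
    have h3 : |iteratedDeriv 3 (fun y => F y t) x| ≤ C / (1+x)^2 := by
      rw [le_div_iff₀ (by positivity)]
      exact h3d
    have habs : |2 * F x t * (ε * iteratedDeriv 3 (fun y => F y t) x)|
        = 2 * |F x t| * (|ε| * |iteratedDeriv 3 (fun y => F y t) x|) := by
      rw [abs_mul, abs_mul, abs_mul]; norm_num
    rw [habs]
    have hsq : (1+x^2) ≤ (1+x)^2 * (1+x)^2 := by nlinarith [sq_nonneg x, sq_nonneg (x*x)]
    have key1 : 2 * |F x t| * (|ε| * |iteratedDeriv 3 (fun y => F y t) x|)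
        ≤ 2 * (C / (1+x)^2) * (|ε| * (C / (1+x)^2)) := by
      have := abs_nonneg (F x t)
      gcongr
    refine key1.trans ?_
    have heqq : 2 * (C / (1+x)^2) * (|ε| * (C / (1+x)^2))
        = (2 * |ε| * (C * C)) / ((1+x)^2 * (1+x)^2) := by
      field_simp
    rw [heqq, hK, ← div_eq_mul_inv]
    gcongr
  -- continuity
  have hcontU : Continuous U := hsm.continuous
  have hcontP : ∀ j, Continuous (Px^[j] U) := fun j => (Px_iterate_smooth hsm j).continuous
  set G : ℝ × ℝ → ℝ := fun p => 2 * F p.1 p.2 * (ε * (Px^[3] U) p) with hG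
  have hGcont : Continuous G := by
    have : Continuous (fun p : ℝ × ℝ => F p.1 p.2) := hcontU
    exact (continuous_const.mul this).mul (continuous_const.mul (hcontP 3))
  -- Step 1 : FTC in time
  have step1 : ∀ x : ℝ, 0 ≤ x → (F x s)^2 = ∫ t in Set.Ioc (0:ℝ) s, G (x, t) := by
    intro x hx
    have hder : ∀ τ ∈ Set.uIcc (0:ℝ) s, HasDerivAt (fun τ => (F x τ)^2) (G (x, τ)) τ := by
      intro τ hτ
      rw [Set.uIcc_of_le hs] at hτ
      have hFd : HasDerivAt (fun τ => F x τ) (deriv (fun τ => F x τ) τ) τ := by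
        have hc : ContDiff ℝ (⊤:ℕ∞) (fun τ : ℝ => F x τ) :=
          hsm.comp (contDiff_const.prodMk contDiff_id)
        exact ((hc.differentiable (by simp)) τ).hasDerivAt
      have h2 := hFd.pow 2
      rw [heq x τ hx hτ.1 (hτ.2.trans hsT)] at h2
      convert h2 using 1
      · rfl
      · rfl
      · rfl
      rw [hiter 3 τ x]
      simp only [hG]
      ring
    have hint : IntervalIntegrable (fun τ => G (x, τ)) volume 0 s :=
      (hGcont.comp (continuous_const.prodMk continuous_id)).intervalIntegrable 0 s
    have h2 := intervalIntegral.integral_eq_sub_of_hasDerivAt hder hint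
    rw [intervalIntegral.integral_of_le hs] at h2
    rw [h2, h0 x hx]; ring
  -- product integrability
  haveI hfin : IsFiniteMeasure (volume.restrict (Set.Ioc (0:ℝ) s)) := by
    constructor
    rw [Measure.restrict_apply_univ]
    exact measure_Ioc_lt_top
  have hKint : Integrable (fun x : ℝ => K * (1 + x^2)⁻¹) (volume.restrict (Set.Ioi 0)) :=
    (integrable_inv_one_add_sq.const_mul K).restrict
  have hprod : Integrable (Function.uncurry (fun x t => G (x, t)))
      ((volume.restrict (Set.Ioi (0:ℝ))).prod (volume.restrict (Set.Ioc (0:ℝ) s))) := by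
    have hg1 : Integrable (fun z : ℝ × ℝ => K * (1 + z.1^2)⁻¹)
        ((volume.restrict (Set.Ioi (0:ℝ))).prod (volume.restrict (Set.Ioc (0:ℝ) s))) := by
      have := hKint.mul_prod (integrable_const (1:ℝ) (μ := volume.restrict (Set.Ioc (0:ℝ) s)))
      simpa using this
    refine hg1.mono' hGcont.aestronglyMeasurable ?_
    rw [Measure.prod_restrict]
    filter_upwards [ae_restrict_mem (measurableSet_Ioi.prod measurableSet_Ioc)] with z hz
    have := hbound z.1 z.2 (le_of_lt hz.1) (le_of_lt hz.2.1) (hz.2.2.trans hsT)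
    simpa only [hG, Real.norm_eq_abs, Function.uncurry] using this
  -- Step 5 : integration by parts in space
  have step5 : ∀ t : ℝ, 0 ≤ t → t ≤ T → (∫ x in Set.Ioi (0:ℝ), G (x, t)) =
      ε * ((deriv (fun y => F y t) 0)^2 - 2 * F 0 t * iteratedDeriv 2 (fun y => F y t) 0) := by
    intro t ht htT
    have e2 : Px^[2] U = Px (Px U) := by
      rw [show (2:ℕ) = 1 + 1 from rfl, Function.iterate_succ_apply, Function.iterate_one]
    have e3 : Px^[3] U = Px (Px^[2] U) := Function.iterate_succ_apply' Px 2 U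
    set g : ℝ → ℝ := fun x => 2 * ε * (U (x,t) * (Px^[2] U) (x,t)) - ε * ((Px U) (x,t))^2 with hg
    have hgd : ∀ x : ℝ, HasDerivAt g (G (x,t)) x := by
      intro x
      have h0' : HasDerivAt (fun x => U (x,t)) ((Px U) (x,t)) x := hasDerivAt_slice hsm t x
      have h1' : HasDerivAt (fun x => (Px U) (x,t)) ((Px^[2] U) (x,t)) x := by
        have := hasDerivAt_slice (Px_smooth hsm) t x
        rwa [← e2] at this
      have h2' : HasDerivAt (fun x => (Px^[2] U) (x,t)) ((Px^[3] U) (x,t)) x := by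
        have := hasDerivAt_slice (Px_iterate_smooth hsm 2) t x
        rwa [← e3] at this
      have hcomb := (((h0'.mul h2').const_mul (2*ε)).sub ((h1'.pow 2).const_mul ε))
      convert hcomb using 1
      · rfl
      · rfl
      · rfl
      simp only [hG]
      ring
    have hgint : IntegrableOn (fun x => G (x,t)) (Set.Ioi 0) := by
      refine hKint.mono' ((hGcont.comp (continuous_id.prodMk continuous_const)).aestronglyMeasurable) ?_
      filter_upwards [ae_restrict_mem measurableSet_Ioi] with x hx
      have := hbound x t (le_of_lt hx) ht htT
      simpa only [hG, Real.norm_eq_abs] using this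
    have htend : Tendsto g atTop (nhds 0) := by
      have hb : ∀ᶠ x in atTop, ‖g x‖ ≤ 3 * |ε| * (C*C) * ((1+x)^2)⁻¹ := by
        filter_upwards [eventually_ge_atTop (0:ℝ)] with x hx
        have h1x : (1:ℝ) ≤ (1+x)^2 := by nlinarith
        have hDj : ∀ j : ℕ, j ≤ 3 → |(Px^[j] U) (x,t)| * (1+x)^2 ≤ C := by
          intro j hj
          rw [← hiter j t x]
          exact hdec x t hx ht htT j hj
        have hD0 := hDj 0 (by norm_num)
        have hD1 := hDj 1 (by norm_num)
        have hD2 := hDj 2 (by norm_num)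
        simp only [Function.iterate_zero_apply] at hD0
        simp only [Function.iterate_one] at hD1
        have htri : ‖g x‖ ≤ 2 * |ε| * (|U (x,t)| * |(Px^[2] U) (x,t)|) + |ε| * |(Px U) (x,t)|^2 := by
          rw [hg, Real.norm_eq_abs]
          refine (abs_sub _ _).trans (le_of_eq ?_)
          rw [abs_mul, abs_mul, abs_mul, abs_mul, abs_pow, abs_two]
        refine htri.trans ?_
        rw [← div_eq_mul_inv, le_div_iff₀ (by positivity : (0:ℝ) < (1+x)^2)]
        have a0 := abs_nonneg (U (x,t))
        have a1 := abs_nonneg ((Px U) (x,t))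
        have a2 := abs_nonneg ((Px^[2] U) (x,t))
        have aε := abs_nonneg ε
        have c1 : |(Px U) (x,t)| ≤ C := le_trans (le_mul_of_one_le_right a1 h1x) hD1
        have c2 : |(Px^[2] U) (x,t)| ≤ C := le_trans (le_mul_of_one_le_right a2 h1x) hD2
        nlinarith [mul_nonneg a0 a2, mul_nonneg (mul_nonneg aε a1) a1,
          mul_le_mul hD0 c2 a2 hCnn, mul_le_mul hD1 c1 a1 hCnn]
      have hlim : Tendsto (fun x : ℝ => 3 * |ε| * (C*C) * ((1+x)^2)⁻¹) atTop (nhds 0) := by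
        have h1 : Tendsto (fun x : ℝ => (1+x)^2) atTop atTop :=
          (tendsto_pow_atTop (two_ne_zero)).comp (tendsto_atTop_add_const_left atTop 1 tendsto_id)
        have := (tendsto_inv_atTop_zero.comp h1).const_mul (3 * |ε| * (C*C))
        simpa using this
      exact squeeze_zero_norm' hb hlim
    have hres := integral_Ioi_of_hasDerivAt_of_tendsto
      ((hgd 0).continuousAt.continuousWithinAt) (fun x _ => hgd x) hgint htend
    rw [hres]
    have ed : deriv (fun y => F y t) 0 = (Px U) (0,t) := by
      rw [hslice t]; exact deriv_slice hsm t 0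
    have e2' : iteratedDeriv 2 (fun y => F y t) 0 = (Px^[2] U) (0,t) := hiter 2 t 0
    rw [ed, e2', hg]
    show (0:ℝ) - (2 * ε * (F 0 t * (Px^[2] U) (0,t)) - ε * ((Px U) (0,t))^2) = _
    ring
  -- assemble
  calc ∫ x in Set.Ioi (0:ℝ), (F x s)^2
      = ∫ x in Set.Ioi (0:ℝ), ∫ t in Set.Ioc (0:ℝ) s, G (x,t) := by
        refine setIntegral_congr_fun measurableSet_Ioi (fun x hx => ?_)
        exact step1 x (le_of_lt hx)
    _ = ∫ t in Set.Ioc (0:ℝ) s, ∫ x in Set.Ioi (0:ℝ), G (x,t) := integral_integral_swap hprod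
    _ = _ := by
        refine setIntegral_congr_fun measurableSet_Ioc (fun t htm => ?_)
        exact step5 t (le_of_lt htm.1) (htm.2.trans hsT)

lemma aux_zero (h : ℝ → ℝ) (hc : Continuous h) (hnn : ∀ x, 0 ≤ h x)
    (hi : MeasureTheory.IntegrableOn h (Set.Ioi 0))
    (hz : ∫ x in Set.Ioi (0:ℝ), h x ≤ 0) : ∀ x : ℝ, 0 ≤ x → h x = 0 := by
  have h0 : ∫ x in Set.Ioi (0:ℝ), h x = 0 :=
    le_antisymm hz (setIntegral_nonneg measurableSet_Ioi fun x _ => hnn x)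
  have hae : h =ᵐ[volume.restrict (Set.Ioi 0)] 0 :=
    (integral_eq_zero_iff_of_nonneg hnn hi).mp h0
  have hmeas : MeasurableSet {x : ℝ | h x ≠ 0} :=
    (isOpen_ne_fun hc continuous_const).measurableSet
  have hnull : volume ({x : ℝ | h x ≠ 0} ∩ Set.Ioi 0) = 0 := by
    have := ae_iff.mp hae
    simp only [Pi.zero_apply, ne_eq] at this
    rwa [Measure.restrict_apply hmeas] at this
  by_contra hcon
  push_neg at hcon
  obtain ⟨x₀, hx₀, hne⟩ := hcon
  have hpos : 0 < h x₀ := lt_of_le_of_ne (hnn x₀) (Ne.symm hne)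
  obtain ⟨δ, hδ, hball⟩ := Metric.continuous_iff.mp hc x₀ (h x₀ / 2) (by linarith)
  set I : Set ℝ := Set.Ioo (max 0 (x₀ - δ)) (x₀ + δ) with hI
  have hIsub : I ⊆ {x : ℝ | h x ≠ 0} ∩ Set.Ioi 0 := by
    intro x hxI
    obtain ⟨hx1, hx2⟩ := hxI
    have hxgt0 : 0 < x := lt_of_le_of_lt (le_max_left _ _) hx1
    have hxd : dist x x₀ < δ := by
      rw [Real.dist_eq, abs_lt]
      constructor
      · have := lt_of_le_of_lt (le_max_right 0 (x₀ - δ)) hx1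
        linarith
      · linarith
    have := hball x hxd
    rw [Real.dist_eq, abs_lt] at this
    exact ⟨by intro hzz; rw [hzz] at this; simp at this; linarith [this.1], hxgt0⟩
  have hvolI : 0 < volume I := by
    rw [hI, Real.volume_Ioo]
    apply ENNReal.ofReal_pos.mpr
    have h1 : max 0 (x₀ - δ) < x₀ + δ := by
      apply max_lt <;> linarith
    linarith
  have hle := measure_mono (μ := volume) hIsub
  rw [hnull] at hle
  exact absurd (le_antisymm hle zero_le) (ne_of_gt hvolI)

lemma bdryCont (F : ℝ → ℝ → ℝ) (ε : ℝ)
    (hsm : ContDiff ℝ (⊤ : ℕ∞) (fun p : ℝ × ℝ => F p.1 p.2)) :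
    Continuous (fun t => ε * ((deriv (fun y => F y t) 0)^2
      - 2 * F 0 t * iteratedDeriv 2 (fun y => F y t) 0)) := by
  set U : ℝ × ℝ → ℝ := fun p => F p.1 p.2 with hU
  have hc0 : Continuous fun t : ℝ => ((0:ℝ), t) := continuous_const.prodMk continuous_id
  have e : (fun t => ε * ((deriv (fun y => F y t) 0)^2
        - 2 * F 0 t * iteratedDeriv 2 (fun y => F y t) 0))
      = fun t => ε * (((Px U) (0,t))^2 - 2 * U (0,t) * (Px^[2] U) (0,t)) := by
    funext t
    rw [show (fun y => F y t) = (fun y => U (y,t)) from rfl]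
    rw [deriv_slice hsm t 0, iteratedDeriv_slice hsm 2 t 0]
  rw [e]
  exact continuous_const.mul
    ((((Px_smooth hsm).continuous.comp hc0).pow 2).sub
      ((continuous_const.mul (hsm.continuous.comp hc0)).mul
        ((Px_iterate_smooth hsm 2).continuous.comp hc0)))
set_option maxHeartbeats 2000000 in
theorem stmt_16 (T : ℝ) (hT : 0 < T) (α₂ α₃ β₂ β₃ : ℝ)
    (hα₂ : α₂ ≠ 0) (hα₃ : α₃ ≠ 0) (hβ₂ : 3*β₂^2 ≤ 1) (hβ₃ : 3*β₃^2 ≤ 1)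
    (u v w : ℝ → ℝ → ℝ)
    (hu_smooth : ContDiff ℝ (⊤ : ℕ∞) (fun p : ℝ × ℝ => u p.1 p.2))
    (hv_smooth : ContDiff ℝ (⊤ : ℕ∞) (fun p : ℝ × ℝ => v p.1 p.2))
    (hw_smooth : ContDiff ℝ (⊤ : ℕ∞) (fun p : ℝ × ℝ => w p.1 p.2))
    -- rapid decay in x of the solutions and their spatial derivatives up to order 3
    (hdecay : ∀ n : ℕ, ∃ C : ℝ, ∀ x t : ℝ, 0 ≤ t → t ≤ T → ∀ j : ℕ, j ≤ 3 →
      (x ≤ 0 → |iteratedDeriv j (fun y => u y t) x| * (1 + |x|)^n ≤ C) ∧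
      (0 ≤ x → |iteratedDeriv j (fun y => v y t) x| * (1 + |x|)^n ≤ C ∧
               |iteratedDeriv j (fun y => w y t) x| * (1 + |x|)^n ≤ C))
    -- the linearized KdV equations on the respective edges
    (hu_eq : ∀ x t : ℝ, x ≤ 0 → 0 ≤ t → t ≤ T →
      deriv (fun τ => u x τ) t + iteratedDeriv 3 (fun y => u y t) x = 0)
    (hv_eq : ∀ x t : ℝ, 0 ≤ x → 0 ≤ t → t ≤ T →
      deriv (fun τ => v x τ) t + iteratedDeriv 3 (fun y => v y t) x = 0)
    (hw_eq : ∀ x t : ℝ, 0 ≤ x → 0 ≤ t → t ≤ T →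
      deriv (fun τ => w x τ) t + iteratedDeriv 3 (fun y => w y t) x = 0)
    -- zero initial data
    (hu0 : ∀ x : ℝ, x ≤ 0 → u x 0 = 0)
    (hv0 : ∀ x : ℝ, 0 ≤ x → v x 0 = 0)
    (hw0 : ∀ x : ℝ, 0 ≤ x → w x 0 = 0)
    -- vertex conditions
    (hbc1 : ∀ t : ℝ, 0 ≤ t → t ≤ T → u 0 t = α₂ * v 0 t ∧ u 0 t = α₃ * w 0 t)
    (hbc2 : ∀ t : ℝ, 0 ≤ t → t ≤ T →
      deriv (fun y => u y t) 0 = β₂ * deriv (fun y => v y t) 0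
        + β₃ * deriv (fun y => w y t) 0)
    (hbc3 : ∀ t : ℝ, 0 ≤ t → t ≤ T →
      iteratedDeriv 2 (fun y => u y t) 0 = (1/α₂) * iteratedDeriv 2 (fun y => v y t) 0
        + (1/α₃) * iteratedDeriv 2 (fun y => w y t) 0) :
    (∀ x t : ℝ, x ≤ 0 → 0 ≤ t → t ≤ T → u x t = 0) ∧
    (∀ x t : ℝ, 0 ≤ x → 0 ≤ t → t ≤ T → v x t = 0) ∧
    (∀ x t : ℝ, 0 ≤ x → 0 ≤ t → t ≤ T → w x t = 0) := by
  classical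
  have hus : ContDiff ℝ (⊤:ℕ∞) (fun p : ℝ × ℝ => u p.1 p.2) := hu_smooth.of_le (by simp)
  have hvs : ContDiff ℝ (⊤:ℕ∞) (fun p : ℝ × ℝ => v p.1 p.2) := hv_smooth.of_le (by simp)
  have hws : ContDiff ℝ (⊤:ℕ∞) (fun p : ℝ × ℝ => w p.1 p.2) := hw_smooth.of_le (by simp)
  set ut : ℝ → ℝ → ℝ := fun x t => u (-x) t with hut
  have huts : ContDiff ℝ (⊤:ℕ∞) (fun p : ℝ × ℝ => ut p.1 p.2) :=
    hus.comp ((contDiff_fst.neg).prodMk contDiff_snd)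
  have hrefl : ∀ (j : ℕ) (t x : ℝ), iteratedDeriv j (fun y => ut y t) x
      = (-1:ℝ)^j * iteratedDeriv j (fun y => u y t) (-x) := by
    intro j t x
    have := iteratedDeriv_comp_neg j (fun y => u y t) x
    simpa [smul_eq_mul] using this
  obtain ⟨C, hC⟩ := hdecay 2
  -- per-edge decay in the form needed by `key`
  have hdec_ut : ∀ x t : ℝ, 0 ≤ x → 0 ≤ t → t ≤ T → ∀ j : ℕ, j ≤ 3 →
      |iteratedDeriv j (fun y => ut y t) x| * (1+x)^2 ≤ C := by
    intro x t hx ht htT j hj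
    rw [hrefl j t x, abs_mul, abs_pow, abs_neg, abs_one, one_pow, one_mul]
    have := (hC (-x) t ht htT j hj).1 (by linarith)
    rw [abs_neg, abs_of_nonneg hx] at this
    exact this
  have hdec_v : ∀ x t : ℝ, 0 ≤ x → 0 ≤ t → t ≤ T → ∀ j : ℕ, j ≤ 3 →
      |iteratedDeriv j (fun y => v y t) x| * (1+x)^2 ≤ C := by
    intro x t hx ht htT j hj
    have := ((hC x t ht htT j hj).2 hx).1
    rwa [abs_of_nonneg hx] at this
  have hdec_w : ∀ x t : ℝ, 0 ≤ x → 0 ≤ t → t ≤ T → ∀ j : ℕ, j ≤ 3 →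
      |iteratedDeriv j (fun y => w y t) x| * (1+x)^2 ≤ C := by
    intro x t hx ht htT j hj
    have := ((hC x t ht htT j hj).2 hx).2
    rwa [abs_of_nonneg hx] at this
  have hCnn : 0 ≤ C := by
    have := hdec_v 0 0 le_rfl le_rfl (le_of_lt hT) 0 (by norm_num)
    exact le_trans (by positivity) this
  -- equations in the form needed by `key`
  have heq_ut : ∀ x t : ℝ, 0 ≤ x → 0 ≤ t → t ≤ T →
      deriv (fun τ => ut x τ) t = 1 * iteratedDeriv 3 (fun y => ut y t) x := by
    intro x t hx ht htT
    have h1 := hu_eq (-x) t (by linarith) ht htT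
    rw [hrefl 3 t x]
    show deriv (fun τ => u (-x) τ) t = 1 * ((-1:ℝ)^3 * iteratedDeriv 3 (fun y => u y t) (-x))
    ring_nf
    ring_nf at h1
    linarith
  have heq_v : ∀ x t : ℝ, 0 ≤ x → 0 ≤ t → t ≤ T →
      deriv (fun τ => v x τ) t = (-1) * iteratedDeriv 3 (fun y => v y t) x := by
    intro x t hx ht htT
    have h1 := hv_eq x t hx ht htT
    linarith
  have heq_w : ∀ x t : ℝ, 0 ≤ x → 0 ≤ t → t ≤ T →
      deriv (fun τ => w x τ) t = (-1) * iteratedDeriv 3 (fun y => w y t) x := by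
    intro x t hx ht htT
    have h1 := hw_eq x t hx ht htT
    linarith
  -- boundary integrand functions
  set fU : ℝ → ℝ := fun t => 1 * ((deriv (fun y => ut y t) 0)^2
    - 2 * ut 0 t * iteratedDeriv 2 (fun y => ut y t) 0) with hfU
  set fV : ℝ → ℝ := fun t => (-1) * ((deriv (fun y => v y t) 0)^2
    - 2 * v 0 t * iteratedDeriv 2 (fun y => v y t) 0) with hfV
  set fW : ℝ → ℝ := fun t => (-1) * ((deriv (fun y => w y t) 0)^2
    - 2 * w 0 t * iteratedDeriv 2 (fun y => w y t) 0) with hfW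
  have hfUc : Continuous fU := bdryCont ut 1 huts
  have hfVc : Continuous fV := bdryCont v (-1) hvs
  have hfWc : Continuous fW := bdryCont w (-1) hws
  -- the main pointwise-in-time statement
  have main : ∀ s : ℝ, 0 ≤ s → s ≤ T →
      (∀ x : ℝ, 0 ≤ x → ut x s = 0) ∧ (∀ x : ℝ, 0 ≤ x → v x s = 0) ∧
      (∀ x : ℝ, 0 ≤ x → w x s = 0) := by
    intro s hs hsT
    have KU := key T ut 1 s hs hsT huts C hdec_ut heq_ut
      (fun x hx => hu0 (-x) (by linarith))
    have KV := key T v (-1) s hs hsT hvs C hdec_v heq_v hv0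
    have KW := key T w (-1) s hs hsT hws C hdec_w heq_w hw0
    have hsum : (∫ x in Set.Ioi (0:ℝ), (ut x s)^2) + (∫ x in Set.Ioi (0:ℝ), (v x s)^2)
        + (∫ x in Set.Ioi (0:ℝ), (w x s)^2)
        = ∫ t in Set.Ioc (0:ℝ) s, (fU t + fV t + fW t) := by
      rw [KU, KV, KW,
        integral_add (f := fun t => fU t + fV t) ((hfUc.add hfVc).integrableOn_Ioc) (hfWc.integrableOn_Ioc),
        integral_add (hfUc.integrableOn_Ioc) (hfVc.integrableOn_Ioc)]
    have hptwise : ∀ t ∈ Set.Ioc (0:ℝ) s, fU t + fV t + fW t ≤ 0 := by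
      intro t htm
      have ht0 : (0:ℝ) ≤ t := le_of_lt htm.1
      have htT : t ≤ T := htm.2.trans hsT
      have hu0t : ut 0 t = u 0 t := by rw [hut]; norm_num
      have hd1 : deriv (fun y => ut y t) 0 = - deriv (fun y => u y t) 0 := by
        have h := hrefl 1 t 0
        rw [iteratedDeriv_one, iteratedDeriv_one] at h
        simpa using h
      have hd2 : iteratedDeriv 2 (fun y => ut y t) 0 = iteratedDeriv 2 (fun y => u y t) 0 := by
        have h := hrefl 2 t 0
        simpa using h
      obtain ⟨hb1, hb1'⟩ := hbc1 t ht0 htT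
      have hb2 := hbc2 t ht0 htT
      have hb3 := hbc3 t ht0 htT
      have e2 : u 0 t * ((1/α₂) * iteratedDeriv 2 (fun y => v y t) 0)
          = v 0 t * iteratedDeriv 2 (fun y => v y t) 0 := by
        rw [hb1]; field_simp
      have e3 : u 0 t * ((1/α₃) * iteratedDeriv 2 (fun y => w y t) 0)
          = w 0 t * iteratedDeriv 2 (fun y => w y t) 0 := by
        rw [hb1']; field_simp
      have hcancel : u 0 t * iteratedDeriv 2 (fun y => u y t) 0
          = v 0 t * iteratedDeriv 2 (fun y => v y t) 0
            + w 0 t * iteratedDeriv 2 (fun y => w y t) 0 := by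
        rw [hb3, mul_add, e2, e3]
      rw [hfU, hfV, hfW]
      simp only [hd1, hd2, hu0t]
      set a := deriv (fun y => v y t) 0
      set b := deriv (fun y => w y t) 0
      have hsq : (deriv (fun y => u y t) 0)^2 ≤ a^2 + b^2 := by
        rw [hb2]
        nlinarith [sq_nonneg (β₂*a - β₃*b), sq_nonneg (β₂*a + β₃*b),
          mul_le_mul_of_nonneg_right hβ₂ (sq_nonneg a),
          mul_le_mul_of_nonneg_right hβ₃ (sq_nonneg b), sq_nonneg a, sq_nonneg b]
      nlinarith [hsq, hcancel]
    have hle : ∫ t in Set.Ioc (0:ℝ) s, (fU t + fV t + fW t) ≤ 0 :=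
      setIntegral_nonpos measurableSet_Ioc hptwise
    have hA : 0 ≤ ∫ x in Set.Ioi (0:ℝ), (ut x s)^2 :=
      setIntegral_nonneg measurableSet_Ioi (fun x _ => sq_nonneg _)
    have hB : 0 ≤ ∫ x in Set.Ioi (0:ℝ), (v x s)^2 :=
      setIntegral_nonneg measurableSet_Ioi (fun x _ => sq_nonneg _)
    have hD : 0 ≤ ∫ x in Set.Ioi (0:ℝ), (w x s)^2 :=
      setIntegral_nonneg measurableSet_Ioi (fun x _ => sq_nonneg _)
    -- integrability of the squares
    have hsqint : ∀ (F : ℝ → ℝ → ℝ), ContDiff ℝ (⊤:ℕ∞) (fun p : ℝ × ℝ => F p.1 p.2) →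
        (∀ x t : ℝ, 0 ≤ x → 0 ≤ t → t ≤ T → ∀ j : ℕ, j ≤ 3 →
          |iteratedDeriv j (fun y => F y t) x| * (1+x)^2 ≤ C) →
        MeasureTheory.IntegrableOn (fun x => (F x s)^2) (Set.Ioi 0) := by
      intro F hsm hdec
      have hcont : Continuous (fun x => (F x s)^2) :=
        ((hsm.continuous.comp (continuous_id.prodMk continuous_const)).pow 2)
      refine MeasureTheory.Integrable.mono'
        ((integrable_inv_one_add_sq.const_mul (C*C)).restrict)
        hcont.aestronglyMeasurable ?_
      filter_upwards [MeasureTheory.ae_restrict_mem measurableSet_Ioi] with x hx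
      have hx0 : (0:ℝ) ≤ x := le_of_lt hx
      have h0d := hdec x s hx0 hs hsT 0 (by norm_num)
      simp only [iteratedDeriv_zero] at h0d
      have h1x : (1:ℝ) ≤ (1+x)^2 := by nlinarith
      have hFC : |F x s| ≤ C := le_trans (le_mul_of_one_le_right (abs_nonneg _) h1x) h0d
      have hx2le : (1:ℝ) + x^2 ≤ (1+x)^2 := by nlinarith
      rw [Real.norm_eq_abs, abs_pow, sq_abs, ← div_eq_mul_inv,
        le_div_iff₀ (by positivity : (0:ℝ) < 1 + x^2)]
      nlinarith [mul_le_mul h0d hFC (abs_nonneg (F x s)) hCnn, sq_abs (F x s),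
        mul_le_mul_of_nonneg_left hx2le (mul_nonneg (abs_nonneg (F x s)) (abs_nonneg (F x s))),
        abs_nonneg (F x s)]
    have hiu := hsqint ut huts hdec_ut
    have hiv := hsqint v hvs hdec_v
    have hiw := hsqint w hws hdec_w
    have hcu : Continuous (fun x => (ut x s)^2) :=
      ((huts.continuous.comp (continuous_id.prodMk continuous_const)).pow 2)
    have hcv : Continuous (fun x => (v x s)^2) :=
      ((hvs.continuous.comp (continuous_id.prodMk continuous_const)).pow 2)
    have hcw : Continuous (fun x => (w x s)^2) :=
      ((hws.continuous.comp (continuous_id.prodMk continuous_const)).pow 2)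
    have hU0 : ∫ x in Set.Ioi (0:ℝ), (ut x s)^2 ≤ 0 := by linarith [hsum.le.trans hle]
    have hV0 : ∫ x in Set.Ioi (0:ℝ), (v x s)^2 ≤ 0 := by linarith [hsum.le.trans hle]
    have hW0 : ∫ x in Set.Ioi (0:ℝ), (w x s)^2 ≤ 0 := by linarith [hsum.le.trans hle]
    refine ⟨fun x hx => ?_, fun x hx => ?_, fun x hx => ?_⟩
    · have := aux_zero _ hcu (fun x => sq_nonneg _) hiu hU0 x hx
      exact pow_eq_zero_iff (two_ne_zero) |>.mp this
    · have := aux_zero _ hcv (fun x => sq_nonneg _) hiv hV0 x hx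
      exact pow_eq_zero_iff (two_ne_zero) |>.mp this
    · have := aux_zero _ hcw (fun x => sq_nonneg _) hiw hW0 x hx
      exact pow_eq_zero_iff (two_ne_zero) |>.mp this
  refine ⟨fun x t hx ht htT => ?_,
    fun x t hx ht htT => (main t ht htT).2.1 x hx,
    fun x t hx ht htT => (main t ht htT).2.2 x hx⟩
  have := (main t ht htT).1 (-x) (by linarith)
  rw [hut] at this
  simpa using this
end
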